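/- Let C and C̄ form a timelike (1,3)-Bertrand pair in E⁴₂ via the map φ and real constants α, β with c̄(φ(s)) = c(s) + α·n₁(s) + β·n₃(s), and suppose the real constant γ satisfies γ·(α·k₂(s) - β·k₃(s)) - α·k₁(s) = 1 and α·k₂(s) - β·k₃(s) ≠ 0 for all s, with γ² > 1. Then the first curvature k̄₁ of the mate satisfies (φ'(s)·k̄₁(φ(s)))² = ((γ·k₁(s) - k₂(s))² - k₃(s)²)/(γ² - 1) for all s ∈ ℝ. -/

import Mathlib

/-!
Write `T = t̄ ∘ φ` and `w = γ t + n₂`. Differentiating the position relation and using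
`γ (α k₂ - β k₃) - α k₁ = 1` gives `φ' T = (α k₂ - β k₃) w`, so `T = ρ w` for a scalar function
`ρ`, and `g(T,T) = -1`, `g(w,w) = 1 - γ²` force `ρ² (γ² - 1) = 1`. Since `T ⊥ n₁, n₃` along the
whole curve, differentiating these orthogonality relations computes the `n₁`- and
`n₃`-components of `T' = -φ' k̄₁ n̄₁` as `ρ (γ k₁ - k₂)` and `ρ k₃` up to sign. As `n̄₁` is a unit
timelike vector of the plane `⟨n₁, n₃⟩`, `g(n̄₁,n₁)² - g(n̄₁,n₃)² = 1`, whence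
`(φ' k̄₁)² = ρ² ((γ k₁ - k₂)² - k₃²)`.
-/

noncomputable section

/-- The indefinite metric of semi-Euclidean space `E⁴₂`:
`g(v,w) = -v₁w₁ - v₂w₂ + v₃w₃ + v₄w₄`. -/
def g4 (v w : Fin 4 → ℝ) : ℝ :=
  -(v 0 * w 0) - v 1 * w 1 + v 2 * w 2 + v 3 * w 3

/-- The semi-Euclidean norm `‖v‖ = √|g(v,v)|` in `E⁴₂`. -/
def nrm4 (v : Fin 4 → ℝ) : ℝ := Real.sqrt |g4 v v|

/-- A `C^∞`-special timelike Frenet curve in `E⁴₂`: a unit-speed timelike curve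
with Frenet frame `t, n₁, n₂, n₃` (with `t, n₁` timelike and `n₂, n₃` spacelike)
and nowhere-vanishing curvatures `k₁, k₂, k₃` satisfying the Frenet equations
`t' = -k₁·n₁`, `n₁' = k₁·t + k₂·n₂`, `n₂' = k₂·n₁ + k₃·n₃`, `n₃' = -k₃·n₂`. -/
structure TimelikeFrenetE42 where
  c : ℝ → Fin 4 → ℝ
  t : ℝ → Fin 4 → ℝ
  n1 : ℝ → Fin 4 → ℝ
  n2 : ℝ → Fin 4 → ℝ
  n3 : ℝ → Fin 4 → ℝ
  k1 : ℝ → ℝ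
  k2 : ℝ → ℝ
  k3 : ℝ → ℝ
  smooth_c : ContDiff ℝ (⊤ : ℕ∞) c
  smooth_t : ContDiff ℝ (⊤ : ℕ∞) t
  smooth_n1 : ContDiff ℝ (⊤ : ℕ∞) n1
  smooth_n2 : ContDiff ℝ (⊤ : ℕ∞) n2
  smooth_n3 : ContDiff ℝ (⊤ : ℕ∞) n3
  smooth_k1 : ContDiff ℝ (⊤ : ℕ∞) k1
  smooth_k2 : ContDiff ℝ (⊤ : ℕ∞) k2
  smooth_k3 : ContDiff ℝ (⊤ : ℕ∞) k3
  deriv_c : ∀ s, HasDerivAt c (t s) s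
  unit_t : ∀ s, g4 (t s) (t s) = -1
  unit_n1 : ∀ s, g4 (n1 s) (n1 s) = -1
  unit_n2 : ∀ s, g4 (n2 s) (n2 s) = 1
  unit_n3 : ∀ s, g4 (n3 s) (n3 s) = 1
  orth_t_n1 : ∀ s, g4 (t s) (n1 s) = 0
  orth_t_n2 : ∀ s, g4 (t s) (n2 s) = 0
  orth_t_n3 : ∀ s, g4 (t s) (n3 s) = 0
  orth_n1_n2 : ∀ s, g4 (n1 s) (n2 s) = 0
  orth_n1_n3 : ∀ s, g4 (n1 s) (n3 s) = 0
  orth_n2_n3 : ∀ s, g4 (n2 s) (n3 s) = 0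
  k1_ne : ∀ s, k1 s ≠ 0
  k2_ne : ∀ s, k2 s ≠ 0
  k3_ne : ∀ s, k3 s ≠ 0
  frenet_t : ∀ s, HasDerivAt t (-(k1 s) • n1 s) s
  frenet_n1 : ∀ s, HasDerivAt n1 (k1 s • t s + k2 s • n2 s) s
  frenet_n2 : ∀ s, HasDerivAt n2 (k2 s • n1 s + k3 s • n3 s) s
  frenet_n3 : ∀ s, HasDerivAt n3 (-(k3 s) • n2 s) s

@[simp]
lemma g4_add_left (x y z : Fin 4 → ℝ) : g4 (x + y) z = g4 x z + g4 y z := by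
  simp only [g4, Pi.add_apply]; ring

@[simp]
lemma g4_add_right (x y z : Fin 4 → ℝ) : g4 x (y + z) = g4 x y + g4 x z := by
  simp only [g4, Pi.add_apply]; ring

@[simp]
lemma g4_smul_left (a : ℝ) (x y : Fin 4 → ℝ) : g4 (a • x) y = a * g4 x y := by
  simp only [g4, Pi.smul_apply, smul_eq_mul]; ring

@[simp]
lemma g4_smul_right (a : ℝ) (x y : Fin 4 → ℝ) : g4 x (a • y) = a * g4 x y := by
  simp only [g4, Pi.smul_apply, smul_eq_mul]; ring

lemma g4_comm (x y : Fin 4 → ℝ) : g4 x y = g4 y x := by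
  simp only [g4]; ring

lemma HasDerivAt.g4 {X Y : ℝ → Fin 4 → ℝ} {X' Y' : Fin 4 → ℝ} {s : ℝ}
    (hX : HasDerivAt X X' s) (hY : HasDerivAt Y Y' s) :
    HasDerivAt (fun u => g4 (X u) (Y u)) (g4 X' (Y s) + g4 (X s) Y') s := by
  have hXi := hasDerivAt_pi.mp hX
  have hYi := hasDerivAt_pi.mp hY
  simp only [_root_.g4]
  exact ((((hXi 0).mul (hYi 0)).neg.sub ((hXi 1).mul (hYi 1))).add
    ((hXi 2).mul (hYi 2))).add ((hXi 3).mul (hYi 3)) |>.congr_deriv (by ring)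

lemma g4_left_eq_neg_of_forall_g4_eq_zero {X Y : ℝ → Fin 4 → ℝ} {X' Y' : Fin 4 → ℝ} {s : ℝ}
    (h : ∀ u, g4 (X u) (Y u) = 0) (hX : HasDerivAt X X' s) (hY : HasDerivAt Y Y' s) :
    g4 X' (Y s) = -g4 (X s) Y' := by
  have hzero : HasDerivAt (fun u => g4 (X u) (Y u)) 0 s := by
    simpa only [h] using hasDerivAt_const s (0 : ℝ)
  linear_combination (hX.g4 hY).unique hzero

namespace TimelikeFrenetE42

attribute [simp] unit_t unit_n1 unit_n2 unit_n3 orth_t_n1 orth_t_n2 orth_t_n3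
  orth_n1_n2 orth_n1_n3 orth_n2_n3

variable (C : TimelikeFrenetE42)

@[simp]
lemma orth_n1_t (s : ℝ) : g4 (C.n1 s) (C.t s) = 0 := by rw [g4_comm, C.orth_t_n1]

@[simp]
lemma orth_n2_t (s : ℝ) : g4 (C.n2 s) (C.t s) = 0 := by rw [g4_comm, C.orth_t_n2]

@[simp]
lemma orth_n3_t (s : ℝ) : g4 (C.n3 s) (C.t s) = 0 := by rw [g4_comm, C.orth_t_n3]

@[simp]
lemma orth_n2_n1 (s : ℝ) : g4 (C.n2 s) (C.n1 s) = 0 := by rw [g4_comm, C.orth_n1_n2]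

@[simp]
lemma orth_n3_n1 (s : ℝ) : g4 (C.n3 s) (C.n1 s) = 0 := by rw [g4_comm, C.orth_n1_n3]

@[simp]
lemma orth_n3_n2 (s : ℝ) : g4 (C.n3 s) (C.n2 s) = 0 := by rw [g4_comm, C.orth_n2_n3]

lemma hasDerivAt_c_add_smul_n1_add_smul_n3 (α β s : ℝ) :
    HasDerivAt (fun u => C.c u + α • C.n1 u + β • C.n3 u)
      ((1 + α * C.k1 s) • C.t s + (α * C.k2 s - β * C.k3 s) • C.n2 s) s :=
  ((C.deriv_c s).add ((C.frenet_n1 s).const_smul α)).add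
    ((C.frenet_n3 s).const_smul β) |>.congr_deriv (by module)

lemma sq_g4_n1_sub_sq_g4_n3_eq_one_of_mem_span {v : Fin 4 → ℝ} {s : ℝ}
    (hv : v ∈ Submodule.span ℝ ({C.n1 s, C.n3 s} : Set (Fin 4 → ℝ))) (hunit : g4 v v = -1) :
    g4 v (C.n1 s) ^ 2 - g4 v (C.n3 s) ^ 2 = 1 := by
  obtain ⟨a, b, rfl⟩ := Submodule.mem_span_pair.mp hv
  simp only [g4_add_left, g4_add_right, g4_smul_left, g4_smul_right, unit_n1, unit_n3,
    orth_n1_n3, orth_n3_n1] at hunit ⊢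
  linear_combination -hunit

lemma sq_mul_sq_sub_one_eq_one_of_eq_smul {v : Fin 4 → ℝ} {ρ γ s : ℝ}
    (hv : v = ρ • (γ • C.t s + C.n2 s)) (hunit : g4 v v = -1) : ρ ^ 2 * (γ ^ 2 - 1) = 1 := by
  simp only [hv, g4_add_left, g4_add_right, g4_smul_left, g4_smul_right, unit_t, unit_n2,
    orth_t_n2, orth_n2_t] at hunit
  linear_combination -hunit

lemma g4_n1_n3_of_hasDerivAt_of_eq_smul {T : ℝ → Fin 4 → ℝ} {T' : Fin 4 → ℝ} {ρ : ℝ → ℝ}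
    {γ s : ℝ} (hT : ∀ u, T u = ρ u • (γ • C.t u + C.n2 u)) (hT' : HasDerivAt T T' s) :
    g4 T' (C.n1 s) = ρ s * (γ * C.k1 s - C.k2 s) ∧ g4 T' (C.n3 s) = ρ s * C.k3 s := by
  have h1 := g4_left_eq_neg_of_forall_g4_eq_zero (fun u => by simp [hT u]) hT' (C.frenet_n1 s)
  have h3 := g4_left_eq_neg_of_forall_g4_eq_zero (fun u => by simp [hT u]) hT' (C.frenet_n3 s)
  simp only [hT s, g4_add_left, g4_add_right, g4_smul_left, g4_smul_right, unit_t, unit_n2,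
    orth_t_n2, orth_n2_t] at h1 h3
  constructor
  · linear_combination h1
  · linear_combination h3

lemma bertrand13_t_comp_eq_smul {Cb : TimelikeFrenetE42} {φ : ℝ → ℝ} {α β γ : ℝ}
    (hφ' : ∀ s, deriv φ s ≠ 0) (hpos : ∀ s, Cb.c (φ s) = C.c s + α • C.n1 s + β • C.n3 s)
    (hγ : ∀ s, γ * (α * C.k2 s - β * C.k3 s) - α * C.k1 s = 1) (s : ℝ) :
    Cb.t (φ s) = ((α * C.k2 s - β * C.k3 s) / deriv φ s) • (γ • C.t s + C.n2 s) := by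
  have hφs := (differentiableAt_of_deriv_ne_zero (hφ' s)).hasDerivAt
  have hd := ((Cb.deriv_c (φ s)).scomp s hφs).unique
    (funext hpos ▸ C.hasDerivAt_c_add_smul_n1_add_smul_n3 α β s)
  apply smul_right_injective _ (hφ' s)
  dsimp only
  rw [hd, smul_smul, mul_div_cancel₀ _ (hφ' s), ← hγ s]
  module

end TimelikeFrenetE42

theorem bertrand13_E42_mate_first_curvature_sq_general
    (C Cb : TimelikeFrenetE42) (φ : ℝ → ℝ) (α β γ : ℝ)
    (hφ' : ∀ s, deriv φ s ≠ 0)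
    (hpos : ∀ s, Cb.c (φ s) = C.c s + α • C.n1 s + β • C.n3 s)
    (hspan : ∀ s, Submodule.span ℝ ({Cb.n1 (φ s), Cb.n3 (φ s)} : Set (Fin 4 → ℝ)) =
      Submodule.span ℝ ({C.n1 s, C.n3 s} : Set (Fin 4 → ℝ)))
    (hγ : ∀ s, γ * (α * C.k2 s - β * C.k3 s) - α * C.k1 s = 1) :
    ∀ s, (deriv φ s * Cb.k1 (φ s)) ^ 2 =
      ((γ * C.k1 s - C.k2 s) ^ 2 - C.k3 s ^ 2) / (γ ^ 2 - 1) := by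
  intro s
  have hT := C.bertrand13_t_comp_eq_smul hφ' hpos hγ
  have hρ := C.sq_mul_sq_sub_one_eq_one_of_eq_smul (hT s) (Cb.unit_t (φ s))
  have hT' : HasDerivAt (fun u => Cb.t (φ u)) (deriv φ s • (-(Cb.k1 (φ s)) • Cb.n1 (φ s))) s :=
    (Cb.frenet_t (φ s)).scomp s (differentiableAt_of_deriv_ne_zero (hφ' s)).hasDerivAt
  obtain ⟨h1, h3⟩ := C.g4_n1_n3_of_hasDerivAt_of_eq_smul hT hT'
  have hplane := C.sq_g4_n1_sub_sq_g4_n3_eq_one_of_mem_span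
    (hspan s ▸ Submodule.subset_span (Set.mem_insert _ _)) (Cb.unit_n1 (φ s))
  simp only [g4_smul_left] at h1 h3
  set K := deriv φ s * Cb.k1 (φ s)
  set A := g4 (Cb.n1 (φ s)) (C.n1 s)
  set B := g4 (Cb.n1 (φ s)) (C.n3 s)
  set P := γ * C.k1 s - C.k2 s
  set ρ := (α * C.k2 s - β * C.k3 s) / deriv φ s
  rw [eq_div_iff (right_ne_zero_of_mul_eq_one hρ)]
  linear_combination (γ ^ 2 - 1) * (-K ^ 2 * hplane + (-K * A + ρ * P) * h1
    - (-K * B + ρ * C.k3 s) * h3) + (P ^ 2 - C.k3 s ^ 2) * hρ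

/-- For a timelike `(1,3)`-Bertrand pair in `E⁴₂` with constant `α, β` and a constant
`γ` with `γ² > 1` satisfying `γ·(α·k₂ - β·k₃) - α·k₁ = 1` and `α·k₂ - β·k₃ ≠ 0`
everywhere, the first curvature `k̄₁` of the mate satisfies
`(φ'(s)·k̄₁(φ(s)))² = ((γ·k₁(s) - k₂(s))² - k₃(s)²)/(γ² - 1)` for all `s`. -/
theorem bertrand13_E42_mate_first_curvature_sq
    (C Cb : TimelikeFrenetE42) (φ : ℝ → ℝ) (α β γ : ℝ)
    (hφ : ContDiff ℝ (⊤ : ℕ∞) φ) (hφ' : ∀ s, deriv φ s ≠ 0)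
    (hpos : ∀ s, Cb.c (φ s) = C.c s + α • C.n1 s + β • C.n3 s)
    (hspan : ∀ s, Submodule.span ℝ ({Cb.n1 (φ s), Cb.n3 (φ s)} : Set (Fin 4 → ℝ)) =
      Submodule.span ℝ ({C.n1 s, C.n3 s} : Set (Fin 4 → ℝ)))
    (hγ2 : γ ^ 2 > 1)
    (hne : ∀ s, α * C.k2 s - β * C.k3 s ≠ 0)
    (hγ : ∀ s, γ * (α * C.k2 s - β * C.k3 s) - α * C.k1 s = 1) :
    ∀ s, (deriv φ s * Cb.k1 (φ s)) ^ 2 =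
      ((γ * C.k1 s - C.k2 s) ^ 2 - C.k3 s ^ 2) / (γ ^ 2 - 1) :=
  bertrand13_E42_mate_first_curvature_sq_general C Cb φ α β γ hφ' hpos hspan hγ
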